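/- arXiv:2101.04069 — 5 statements merged into one kernel-verified Lean document; each statement's English description precedes it below -/
import Mathlib

section
/- Let n ∈ ℕ, F ⊆ ℕ^n, and M := Min(J_F). Let P ⊆ M and L ⊆ Fin n be such that [γ] ⊆ L for every γ ∈ P. Let α ∈ F and k ∈ [α] with k ∉ L, and suppose that β := α − e_k lies in M \ P and has minimal degree there, i.e. |β| ≤ |β'| for every β' ∈ M \ P. Then α − e_i ∈ M \ P for every i ∈ [α]; in particular, α contributes |[α]| pairwise distinct elements of M \ P, each of degree |α| − 1. -/
/-- `δ(F)`: the set of all `α - e_i` for `α ∈ F` and `i` with `α i > 0`. -/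
def deltaSet {n : ℕ} (F : Set (Fin n → ℕ)) : Set (Fin n → ℕ) :=
  {γ | ∃ α ∈ F, ∃ i : Fin n, α i ≠ 0 ∧ γ = α - Pi.single i 1}

/-- `J_F`: the semigroup ideal of `ℕ^n` generated by `δ(F)`. -/
def semigroupIdeal {n : ℕ} (F : Set (Fin n → ℕ)) : Set (Fin n → ℕ) :=
  {β | ∃ γ ∈ deltaSet F, γ ≤ β}

/-- The set of minimal elements of a subset of `ℕ^n`. -/
def minSet {n : ℕ} (S : Set (Fin n → ℕ)) : Set (Fin n → ℕ) :=
  {β ∈ S | ∀ β' ∈ S, β' ≤ β → β' = β}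

/-- The degree `|α| = Σ_i α_i`. -/
def deg {n : ℕ} (α : Fin n → ℕ) : ℕ := ∑ i, α i

/-!
Every `α - e_i` lies in `J_F` and has the same degree `|α| - 1` as `β = α - e_k`. A minimal
generator `m ≤ α - e_i` outside `P` has degree at least `|β|`, so it is `α - e_i` itself; one
inside `P` vanishes at `k ∉ L`, hence `m ≤ β`, and the minimality of `β` would put `β` in `P`.
So `α - e_i` is minimal, and it avoids `P` because its `k`-th coordinate is `α k ≠ 0`
(or it is `β`).
-/

section Degree

variable {n : ℕ}

lemma single_one_le_of_ne_zero {α : Fin n → ℕ} {i : Fin n} (hi : α i ≠ 0) :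
    Pi.single i 1 ≤ α := fun j => by
  rcases eq_or_ne j i with rfl | hj
  · simpa [Nat.one_le_iff_ne_zero] using hi
  · simp [hj]

lemma deg_add (a b : Fin n → ℕ) : deg (a + b) = deg a + deg b :=
  Finset.sum_add_distrib

lemma deg_single_one (i : Fin n) : deg (Pi.single i 1 : Fin n → ℕ) = 1 := by
  simp [deg]

lemma deg_sub_single {α : Fin n → ℕ} {i : Fin n} (hi : α i ≠ 0) :
    deg (α - Pi.single i 1) = deg α - 1 := by
  have h := congrArg deg (tsub_add_cancel_of_le (single_one_le_of_ne_zero hi))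
  rw [deg_add, deg_single_one] at h
  omega

lemma deg_mono {a b : Fin n → ℕ} (h : a ≤ b) : deg a ≤ deg b :=
  Finset.sum_le_sum fun i _ => h i

lemma eq_of_le_of_deg_le {a b : Fin n → ℕ} (h : a ≤ b) (hd : deg b ≤ deg a) : a = b :=
  funext fun i => (Finset.sum_eq_sum_iff_of_le fun j _ => h j).1
    (le_antisymm (deg_mono h) hd) i (Finset.mem_univ i)

end Degree

section SubSingle

variable {n : ℕ} {α : Fin n → ℕ}

lemma sub_single_apply_of_ne {i j : Fin n} (hij : j ≠ i) :
    (α - Pi.single i 1 : Fin n → ℕ) j = α j := by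
  simp [hij]

lemma le_sub_single_of_le_of_apply_eq_zero {m : Fin n → ℕ} {k : Fin n} (hm : m ≤ α)
    (hmk : m k = 0) : m ≤ α - Pi.single k 1 := fun j => by
  rcases eq_or_ne j k with rfl | hj
  · simp [hmk]
  · simpa [sub_single_apply_of_ne hj] using hm j

lemma eq_of_sub_single_eq {i j : Fin n} (hi : α i ≠ 0)
    (h : α - Pi.single i 1 = α - Pi.single j 1) : i = j := by
  by_contra hij
  have h' := congrFun h i
  rw [sub_single_apply_of_ne hij] at h'
  simp only [Pi.sub_apply, Pi.single_eq_same] at h'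
  omega

end SubSingle

section MinimalGenerators

variable {n : ℕ}

lemma exists_mem_minSet_le {S : Set (Fin n → ℕ)} {b : Fin n → ℕ} (hb : b ∈ S) :
    ∃ m ∈ minSet S, m ≤ b := by
  obtain ⟨m, hmb, hm⟩ := exists_minimal_le_of_wellFoundedLT (· ∈ S) b hb
  exact ⟨m, ⟨hm.prop, fun _ h hle => hm.eq_of_le h hle⟩, hmb⟩

lemma mem_minSet_of_forall_minSet_le_eq {S : Set (Fin n → ℕ)} {b : Fin n → ℕ} (hb : b ∈ S)
    (h : ∀ m ∈ minSet S, m ≤ b → m = b) : b ∈ minSet S := by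
  refine ⟨hb, fun b' hb' hle => ?_⟩
  obtain ⟨m, hm, hmb'⟩ := exists_mem_minSet_le hb'
  obtain rfl := h m hm (hmb'.trans hle)
  exact le_antisymm hle hmb'

lemma sub_single_mem_semigroupIdeal {F : Set (Fin n → ℕ)} {α : Fin n → ℕ} (hα : α ∈ F)
    {i : Fin n} (hi : α i ≠ 0) : α - Pi.single i 1 ∈ semigroupIdeal F :=
  ⟨_, ⟨α, hα, i, hi, rfl⟩, le_rfl⟩

variable {F P : Set (Fin n → ℕ)} {L : Set (Fin n)} {α : Fin n → ℕ} {k : Fin n}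

lemma sub_single_mem_minSet (hPL : ∀ γ ∈ P, Function.support γ ⊆ L) (hα : α ∈ F)
    (hk : α k ≠ 0) (hkL : k ∉ L) (hβ : α - Pi.single k 1 ∈ minSet (semigroupIdeal F) \ P)
    (hmin : ∀ β' ∈ minSet (semigroupIdeal F) \ P, deg (α - Pi.single k 1) ≤ deg β')
    {i : Fin n} (hi : α i ≠ 0) : α - Pi.single i 1 ∈ minSet (semigroupIdeal F) := by
  refine mem_minSet_of_forall_minSet_le_eq (sub_single_mem_semigroupIdeal hα hi)
    fun m hm hle => ?_
  by_cases hmP : m ∈ P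
  · have hmk : m k = 0 := Function.notMem_support.mp fun h => hkL (hPL m hmP h)
    have hmβ : m ≤ α - Pi.single k 1 :=
      le_sub_single_of_le_of_apply_eq_zero (hle.trans tsub_le_self) hmk
    exact absurd (hβ.1.2 m hm.1 hmβ ▸ hmP) hβ.2
  · refine eq_of_le_of_deg_le hle ?_
    calc deg (α - Pi.single i 1) = deg (α - Pi.single k 1) := by
          rw [deg_sub_single hi, deg_sub_single hk]
      _ ≤ deg m := hmin m ⟨hm, hmP⟩

lemma sub_single_notMem (hPL : ∀ γ ∈ P, Function.support γ ⊆ L) (hk : α k ≠ 0)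
    (hkL : k ∉ L) (hβ : α - Pi.single k 1 ∉ P) (i : Fin n) : α - Pi.single i 1 ∉ P := by
  rcases eq_or_ne k i with rfl | hki
  · exact hβ
  · exact fun hP => hkL (hPL _ hP (by rwa [Function.mem_support, sub_single_apply_of_ne hki]))

end MinimalGenerators

theorem new_minimal_generators_general {n : ℕ} (F : Set (Fin n → ℕ))
    (P : Set (Fin n → ℕ)) (L : Set (Fin n))
    (hPL : ∀ γ ∈ P, Function.support γ ⊆ L)
    (α : Fin n → ℕ) (hα : α ∈ F) (k : Fin n) (hk : α k ≠ 0) (hkL : k ∉ L)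
    (hβ : α - Pi.single k 1 ∈ minSet (semigroupIdeal F) \ P)
    (hmin : ∀ β' ∈ minSet (semigroupIdeal F) \ P,
      deg (α - Pi.single k 1) ≤ deg β') :
    (∀ i : Fin n, α i ≠ 0 →
        α - Pi.single i 1 ∈ minSet (semigroupIdeal F) \ P ∧
        deg (α - Pi.single i 1) = deg α - 1) ∧
    (∀ i j : Fin n, α i ≠ 0 → α j ≠ 0 →
        α - Pi.single i 1 = α - Pi.single j 1 → i = j) :=
  ⟨fun i hi => ⟨⟨sub_single_mem_minSet hPL hα hk hkL hβ hmin hi,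
      sub_single_notMem hPL hk hkL hβ.2 i⟩, deg_sub_single hi⟩,
    fun _ _ hi _ => eq_of_sub_single_eq hi⟩

/-- If `α ∈ F` has `k ∈ [α]` with `k ∉ L` and `β = α - e_k` is a new minimal
generator of minimal degree among `Min(J_F) \ P` (where `P ⊆ Min(J_F)` is
supported inside `L`), then every `α - e_i`, `i ∈ [α]`, is a new minimal
generator; these are pairwise distinct of degree `|α| - 1`. -/
theorem new_minimal_generators {n : ℕ} (F : Set (Fin n → ℕ))
    (P : Set (Fin n → ℕ)) (L : Set (Fin n))
    (hP : P ⊆ minSet (semigroupIdeal F))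
    (hPL : ∀ γ ∈ P, Function.support γ ⊆ L)
    (α : Fin n → ℕ) (hα : α ∈ F) (k : Fin n) (hk : α k ≠ 0) (hkL : k ∉ L)
    (hβ : α - Pi.single k 1 ∈ minSet (semigroupIdeal F) \ P)
    (hmin : ∀ β' ∈ minSet (semigroupIdeal F) \ P,
      deg (α - Pi.single k 1) ≤ deg β') :
    (∀ i : Fin n, α i ≠ 0 →
        α - Pi.single i 1 ∈ minSet (semigroupIdeal F) \ P ∧
        deg (α - Pi.single i 1) = deg α - 1) ∧
    (∀ i j : Fin n, α i ≠ 0 → α j ≠ 0 →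
        α - Pi.single i 1 = α - Pi.single j 1 → i = j) :=
  new_minimal_generators_general F P L hPL α hα k hk hkL hβ hmin
end

section
/- Let K be a field, let M and I be finite sets, and let v : I → (M → K) be a family of vectors that spans the K-vector space M → K. Then there exists an injective map τ : M → I such that (v (τ m)) m ≠ 0 for every m ∈ M. -/
/-!
The sets `t m = {i | v i m ≠ 0}` satisfy Hall's condition. For finite `s ⊆ M`, the restrictions of the
`v i` to `s` still span `s → K`, and only those `v i` that are nonzero somewhere on `s` survive the
restriction as nonzero vectors; so at least `dim (s → K) = #s` of them are, i.e.
`#s ≤ #(⋃ m ∈ s, t m)`. Hall's marriage theorem then gives the injective transversal.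
-/

open Finset Module Submodule

theorem Submodule.span_range_comp_eq_top_of_surjective {R V W ι : Type*} [Semiring R]
    [AddCommMonoid V] [Module R V] [AddCommMonoid W] [Module R W] {w : ι → V}
    (hw : span R (Set.range w) = ⊤) {f : V →ₗ[R] W} (hf : Function.Surjective f) :
    span R (Set.range (f ∘ w)) = ⊤ := by
  rw [Set.range_comp, ← map_span, hw, map_top, LinearMap.range_eq_top.mpr hf]

theorem Module.finrank_le_card_filter_ne_zero_of_span_eq_top {R V ι : Type*} [Ring R]
    [StrongRankCondition R] [AddCommGroup V] [Module R V] [Fintype ι] [DecidableEq V]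
    {w : ι → V} (hw : span R (Set.range w) = ⊤) :
    finrank R V ≤ #{i | w i ≠ 0} := by
  have hspan : span R (Set.range fun i : {i // w i ≠ 0} ↦ w i) = ⊤ := by
    rw [← hw, ← span_sdiff_singleton_zero (s := Set.range w)]
    congr 1
    ext
    aesop
  calc finrank R V = (Set.range fun i : {i // w i ≠ 0} ↦ w i).finrank R := by
        rw [Set.finrank, hspan, finrank_top]
    _ ≤ Fintype.card {i // w i ≠ 0} := finrank_range_le_card _
    _ = #{i | w i ≠ 0} := Fintype.card_subtype _

open Classical in
theorem card_le_card_biUnion_support_of_span_eq_top {K M I : Type*} [Field K] [Fintype I]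
    {v : I → M → K} (hspan : span K (Set.range v) = ⊤) (s : Finset M) :
    #s ≤ #(s.biUnion fun m ↦ {i | v i m ≠ 0}) := by
  let restrict : (M → K) →ₗ[K] (s → K) := LinearMap.funLeft K K Subtype.val
  have hrestrict : span K (Set.range (restrict ∘ v)) = ⊤ :=
    span_range_comp_eq_top_of_surjective hspan
      (LinearMap.funLeft_surjective_of_injective K K _ Subtype.val_injective)
  have hsupport : ({i | restrict (v i) ≠ 0} : Finset I) = s.biUnion fun m ↦ {i | v i m ≠ 0} := by
    ext i
    simp [restrict, funext_iff, LinearMap.funLeft]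
  calc #s = finrank K (s → K) := by simp
    _ ≤ #{i | restrict (v i) ≠ 0} := finrank_le_card_filter_ne_zero_of_span_eq_top hrestrict
    _ = _ := by rw [hsupport]

theorem spanning_family_has_transversal_general {K : Type*} [Field K]
    {M I : Type*} [Fintype I]
    (v : I → (M → K)) (hspan : Submodule.span K (Set.range v) = ⊤) :
    ∃ τ : M → I, Function.Injective τ ∧ ∀ m : M, v (τ m) m ≠ 0 := by
  classical
  obtain ⟨τ, hτ, hτmem⟩ := (all_card_le_biUnion_card_iff_exists_injective _).mp
    (card_le_card_biUnion_support_of_span_eq_top hspan)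
  exact ⟨τ, hτ, fun m ↦ by simpa using hτmem m⟩

/-- A family of vectors spanning `M → K` admits an injective partial transversal:
an injective choice `τ : M → I` of columns with `(v (τ m)) m ≠ 0` for all `m`. -/
theorem spanning_family_has_transversal {K : Type*} [Field K]
    {M I : Type*} [Fintype M] [Fintype I]
    (v : I → (M → K)) (hspan : Submodule.span K (Set.range v) = ⊤) :
    ∃ τ : M → I, Function.Injective τ ∧ ∀ m : M, v (τ m) m ≠ 0 :=
  spanning_family_has_transversal_general v hspan
end

section
/- Let f ∈ ℂ[x₁,…,xₙ] be nonconstant and suppose its Jacobian ideal J_f is a monomial ideal. Then there exists a Thom–Sebastiani polynomial f' = Σ_{α ∈ F'} x^α (with F' ⊆ ℕ^n a finite nonempty set of nonzero exponent vectors having pairwise disjoint supports, and all coefficients equal to 1) such that J_{f'} = J_f. -/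
/-!
Let `G` be the set of minimal exponents of the monomials of the partial derivatives `∂ᵢf`; as
`J_f` is monomial, `J_f = ⟨x^γ : γ ∈ G⟩`. Reading `x^γ = ∑ hᵢ ∂ᵢf` at the coefficients indexed
by `G` shows that the matrix `(coeff_δ ∂ᵢf)_{δ ∈ G, i}` has rank `|G|`, so Hall's theorem gives
an injective `σ` from `G` to the variables with `x^γ x_{σ γ}` a monomial of `f`.

Since `σ` is injective, maps of the form `z ↦ σ (ρ + e_z)` on the shifts `ρ + e_z ∈ G` are
injective, and whenever they map these shifts into themselves they are onto. Repeatedly applying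
this pigeonhole principle shows that every exponent of every `∂ⱼ(x^γ x_{σ γ})` lies in `G`, and
that two such monomials sharing a variable coincide (after replacing `x_i x_{σ e_i}` by `x_i²`
when `x_i ∈ J_f`). The sum of these monomials is the Thom–Sebastiani polynomial.
-/

open MvPolynomial

/-- The monomial `x^β`, for `β : Fin n → ℕ`. -/
noncomputable def mono {n : ℕ} (β : Fin n → ℕ) : MvPolynomial (Fin n) ℂ :=
  monomial (Finsupp.equivFunOnFinite.symm β) 1

/-- The Jacobian ideal `J_f = ⟨∂f/∂x₁, …, ∂f/∂xₙ⟩`. -/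
noncomputable def jacobianIdeal {n : ℕ} (f : MvPolynomial (Fin n) ℂ) :
    Ideal (MvPolynomial (Fin n) ℂ) :=
  Ideal.span (Set.range fun i => pderiv i f)

open Finsupp

namespace MonomialJacobian

section Combinatorics

variable {ι : Type*}

lemma degree_lt_degree_of_lt {δ β : ι →₀ ℕ} (h : δ < β) : degree δ < degree β := by
  obtain ⟨ε, rfl⟩ := exists_add_of_le h.le
  have hε : degree ε ≠ 0 := by
    rw [Ne, degree_eq_zero_iff]
    rintro rfl
    simp at h
  rw [map_add]
  omega

lemma degree_add_single (δ : ι →₀ ℕ) (i : ι) : degree (δ + single i 1) = degree δ + 1 := by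
  rw [map_add, degree_single]

lemma single_le_of_le_add_single {δ γ : ι →₀ ℕ} {s : ι} (h : δ ≤ γ + single s 1)
    (hδ : ¬ δ ≤ γ) : single s 1 ≤ δ := by
  rw [single_le_iff, Nat.one_le_iff_ne_zero]
  intro hs
  refine hδ fun x => ?_
  have := h x
  rcases eq_or_ne x s with rfl | hx
  · simp [hs]
  · simpa [single_apply, Ne.symm hx] using this

lemma eq_or_eq_of_single_add_single_eq {a b c d : ι}
    (h : single a 1 + single b 1 = single c (1 : ℕ) + single d 1) : a = c ∨ a = d := by
  rcases (single_add_single_eq_single_add_single one_ne_zero one_ne_zero).1 h with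
    ⟨hac, -⟩ | ⟨-, had, -⟩ | ⟨h2, -⟩
  · exact .inl hac
  · exact .inr had
  · exact absurd h2 (by norm_num)

lemma exists_sigma_add_single_eq {G : Finset (ι →₀ ℕ)} {σ : (ι →₀ ℕ) → ι}
    (hσ : Set.InjOn σ G) (ρ : ι →₀ ℕ)
    (hmaps : ∀ z, ρ + single z 1 ∈ G → ρ + single (σ (ρ + single z 1)) 1 ∈ G)
    {s : ι} (hs : ρ + single s 1 ∈ G) : ∃ x, ρ + single x 1 ∈ G ∧ σ (ρ + single x 1) = s := by
  have hshift : Function.Injective fun z : ι => ρ + single z 1 :=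
    (add_right_injective ρ).comp (single_left_injective one_ne_zero)
  have hfin : {z | ρ + single z 1 ∈ G}.Finite :=
    G.finite_toSet.preimage hshift.injOn
  have hinj : Set.InjOn (fun z => σ (ρ + single z 1)) {z | ρ + single z 1 ∈ G} :=
    fun z hz z' hz' hzz' => hshift (hσ hz hz' hzz')
  exact ((hfin.injOn_iff_bijOn_of_mapsTo hmaps).1 hinj).surjOn hs

/-- Abstraction of the minimal exponents `G` of a monomial Jacobian ideal `J_f`, with `σ`
matching each `γ ∈ G` to a variable such that `x^γ x_{σ γ}` is a monomial of `f`. -/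
structure IsJacobianMatching (G : Finset (ι →₀ ℕ)) (σ : (ι →₀ ℕ) → ι) : Prop where
  isAntichain : IsAntichain (· ≤ ·) (G : Set (ι →₀ ℕ))
  injOn : Set.InjOn σ G
  exists_le_of_add_single_eq : ∀ γ ∈ G, ∀ β j, β + single j 1 = γ + single (σ γ) 1 →
    ∃ δ ∈ G, δ ≤ β

namespace IsJacobianMatching

variable {G : Finset (ι →₀ ℕ)} {σ : (ι →₀ ℕ) → ι}

theorem mem_of_add_single_eq (h : IsJacobianMatching G σ) {γ β : ι →₀ ℕ} {j : ι}
    (hγ : γ ∈ G) (hβ : β + single j 1 = γ + single (σ γ) 1) : β ∈ G := by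
  induction hd : degree γ using Nat.strong_induction_on generalizing γ β j with
  | _ d ih =>
    by_contra hβG
    obtain ⟨δ, hδ, hδβ⟩ := h.exists_le_of_add_single_eq γ hγ β j hβ
    have hdeg : degree δ < d := by
      have hlt := degree_lt_degree_of_lt (lt_of_le_of_ne hδβ (ne_of_mem_of_not_mem hδ hβG))
      have := congrArg degree hβ
      rw [degree_add_single, degree_add_single] at this
      omega
    have hδγ : ¬ δ ≤ γ := fun hle => by
      rw [h.isAntichain.eq hδ hγ hle] at hdeg
      omega
    obtain ⟨ρ, rfl⟩ := exists_add_of_le <|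
      single_le_of_le_add_single (hδβ.trans (hβ ▸ le_self_add)) hδγ
    have hρ : degree ρ + 1 < d := by rwa [add_comm, degree_add_single] at hdeg
    -- By induction `z ↦ σ (ρ + e_z)` maps the shifts of `ρ` lying in `G` into themselves, hence
    -- onto them; so one of them is `σ⁻¹ (σ γ) = γ`, whose degree is too large.
    obtain ⟨x, hx, hσx⟩ := exists_sigma_add_single_eq h.injOn ρ
      (fun z hz => ih _ (by rwa [degree_add_single]) hz (add_right_comm _ _ _) rfl)
      (s := σ γ) (by rwa [add_comm])
    have := congrArg degree (h.injOn hx hγ hσx)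
    rw [degree_add_single] at this
    omega

theorem exists_add_single_eq_of_single_le (h : IsJacobianMatching G σ) {γ ζ : ι →₀ ℕ}
    (hγ : γ ∈ G) (hζ : ζ ∈ G) (hle : single (σ γ) 1 ≤ ζ) :
    ∃ x, ζ + single x 1 = γ + single (σ γ) 1 := by
  obtain ⟨ρ, rfl⟩ := exists_add_of_le hle
  rw [add_comm] at hζ ⊢
  obtain ⟨x, hx, hσx⟩ := exists_sigma_add_single_eq h.injOn ρ
    (fun z hz => h.mem_of_add_single_eq hz (add_right_comm _ _ _)) hζ
  exact ⟨x, by rw [add_right_comm, h.injOn hx hγ hσx]⟩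

theorem sigma_eq_of_add_single_eq (h : IsJacobianMatching G σ) {γ η : ι →₀ ℕ} {m : ι}
    (hγ : γ ∈ G) (hdeg : degree γ ≠ 1) (hη : η ∈ G)
    (hηγ : η + single m 1 = γ + single (σ γ) 1) : σ η = m := by
  set s := σ γ
  by_cases hms : m = s
  · subst hms
    exact congrArg σ (add_right_cancel hηγ)
  by_contra hu
  have hm : single m 1 ≤ γ := by
    have := DFunLike.congr_fun hηγ m
    simp only [Finsupp.coe_add, Pi.add_apply, single_eq_same, single_eq_of_ne hms] at this
    exact single_le_iff.2 (by omega)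
  obtain ⟨ρ, rfl⟩ := exists_add_of_le hm
  have hηρ : η = ρ + single s 1 := add_right_cancel (b := single m 1) (by rw [hηγ]; abel)
  by_cases hule : single (σ η) 1 ≤ single m 1 + ρ
  · obtain ⟨y, hy⟩ := h.exists_add_single_eq_of_single_le hη hγ hule
    have : single m 1 + single y 1 = single s 1 + single (σ η) 1 :=
      add_left_cancel (a := ρ) (by convert hy using 1 <;> [abel; (rw [hηρ]; abel)])
    rcases eq_or_eq_of_single_add_single_eq this with h1 | h1
    exacts [hms h1, hu h1.symm]
  · have hρ : ρ ≠ 0 := by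
      rintro rfl
      simp [degree_single] at hdeg
    obtain ⟨l, hl⟩ := support_nonempty_iff.2 hρ
    obtain ⟨κ, rfl⟩ := exists_add_of_le <|
      single_le_iff.2 (Nat.one_le_iff_ne_zero.2 (mem_support_iff.1 hl))
    have hχ : κ + single s 1 + single (σ η) 1 ∈ G :=
      h.mem_of_add_single_eq hη (j := l) (by rw [hηρ]; abel)
    obtain ⟨x, hx⟩ := h.exists_add_single_eq_of_single_le hγ hχ (le_add_right le_add_self)
    have : single (σ η) 1 + single x 1 = single l 1 + single m 1 :=
      add_left_cancel (a := κ + single s 1) (by convert hx using 1 <;> abel)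
    rcases eq_or_eq_of_single_add_single_eq this with h1 | h1
    · exact hule (h1 ▸ le_add_left le_self_add)
    · exact hu h1

theorem exists_sigma_eq_of_mem_support (h : IsJacobianMatching G σ) {γ : ι →₀ ℕ} {v : ι}
    (hγ : γ ∈ G) (hdeg : degree γ ≠ 1) (hv : v ∈ (γ + single (σ γ) 1).support) :
    ∃ μ ∈ G, μ + single v 1 = γ + single (σ γ) 1 ∧ σ μ = v := by
  obtain ⟨μ, hμ⟩ := exists_add_of_le
    (single_le_iff.2 (Nat.one_le_iff_ne_zero.2 (mem_support_iff.1 hv)))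
  rw [add_comm (single v 1)] at hμ
  have hμG := h.mem_of_add_single_eq hγ hμ.symm
  exact ⟨μ, hμG, hμ.symm, h.sigma_eq_of_add_single_eq hγ hdeg hμG hμ.symm⟩

theorem notMem_support_of_single_mem (h : IsJacobianMatching G σ) {γ : ι →₀ ℕ} {v : ι}
    (hγ : γ ∈ G) (hdeg : degree γ ≠ 1) (hv : single v 1 ∈ G) :
    v ∉ (γ + single (σ γ) 1).support := by
  intro hvγ
  obtain ⟨μ, hμ, hμγ, hσμ⟩ := h.exists_sigma_eq_of_mem_support hγ hdeg hvγ
  obtain ⟨x, hx⟩ := h.exists_add_single_eq_of_single_le hμ hv (hσμ ▸ le_rfl)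
  rw [hσμ, add_comm] at hx
  have := congrArg degree hμγ
  rw [degree_add_single, degree_add_single, ← add_right_cancel hx, degree_single] at this
  omega

end IsJacobianMatching

lemma eq_single_of_mem_support_add_self {γ : ι →₀ ℕ} (hdeg : degree γ = 1) {v : ι}
    (hv : v ∈ (γ + γ).support) : γ = single v 1 := by
  obtain ⟨a, rfl⟩ : ∃ a, single a 1 = γ := (Set.ext_iff.1 range_single_one γ).2 hdeg
  rw [← single_add, support_single _ (by norm_num), Finset.mem_singleton] at hv
  rw [hv]

/-- The summand of the Thom–Sebastiani polynomial attached to `γ ∈ G`. A variable `x_i ∈ J_f`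
gets `x_i²` rather than `x_i x_{σ e_i}`, which would share the variable `x_{σ e_i}` with another
summand. -/
noncomputable def block (σ : (ι →₀ ℕ) → ι) (γ : ι →₀ ℕ) : ι →₀ ℕ :=
  if degree γ = 1 then γ + γ else γ + single (σ γ) 1

section Block

variable (σ : (ι →₀ ℕ) → ι) {γ : ι →₀ ℕ}

lemma block_of_degree_eq_one (hdeg : degree γ = 1) : block σ γ = γ + γ := if_pos hdeg

lemma block_of_degree_ne_one (hdeg : degree γ ≠ 1) : block σ γ = γ + single (σ γ) 1 :=
  if_neg hdeg

lemma block_ne_zero (γ : ι →₀ ℕ) : block σ γ ≠ 0 := by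
  rw [Ne, ← degree_eq_zero_iff]
  by_cases hdeg : degree γ = 1
  · rw [block_of_degree_eq_one σ hdeg, map_add, hdeg]
    norm_num
  · rw [block_of_degree_ne_one σ hdeg, degree_add_single]
    omega

lemma exists_add_single_eq_block (γ : ι →₀ ℕ) : ∃ i, γ + single i 1 = block σ γ := by
  by_cases hdeg : degree γ = 1
  · obtain ⟨a, rfl⟩ : ∃ a, single a 1 = γ := (Set.ext_iff.1 range_single_one γ).2 hdeg
    exact ⟨a, (block_of_degree_eq_one σ hdeg).symm⟩
  · exact ⟨σ γ, (block_of_degree_ne_one σ hdeg).symm⟩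

end Block

namespace IsJacobianMatching

variable {G : Finset (ι →₀ ℕ)} {σ : (ι →₀ ℕ) → ι}

theorem mem_of_add_single_eq_block (h : IsJacobianMatching G σ) {γ δ : ι →₀ ℕ} {i : ι}
    (hγ : γ ∈ G) (hδ : δ + single i 1 = block σ γ) : δ ∈ G := by
  by_cases hdeg : degree γ = 1
  · rw [block_of_degree_eq_one σ hdeg] at hδ
    have hi : i ∈ (γ + γ).support := by
      rw [← hδ, Finsupp.mem_support_iff]
      simp
    rw [eq_single_of_mem_support_add_self hdeg hi] at hγ hδ
    rwa [add_right_cancel hδ]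
  · exact h.mem_of_add_single_eq hγ (hδ.trans (block_of_degree_ne_one σ hdeg))

theorem block_eq_of_mem_support (h : IsJacobianMatching G σ) {γ γ' : ι →₀ ℕ} {v : ι}
    (hγ : γ ∈ G) (hγ' : γ' ∈ G) (hv : v ∈ (block σ γ).support)
    (hv' : v ∈ (block σ γ').support) : block σ γ = block σ γ' := by
  by_cases hdeg : degree γ = 1 <;> by_cases hdeg' : degree γ' = 1 <;>
    simp only [block_of_degree_eq_one, block_of_degree_ne_one, hdeg, hdeg', ne_eq,
      not_false_eq_true] at hv hv' ⊢
  · rw [eq_single_of_mem_support_add_self hdeg hv, eq_single_of_mem_support_add_self hdeg' hv']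
  · rw [eq_single_of_mem_support_add_self hdeg hv] at hγ
    exact absurd hv' (h.notMem_support_of_single_mem hγ' hdeg' hγ)
  · rw [eq_single_of_mem_support_add_self hdeg' hv'] at hγ'
    exact absurd hv (h.notMem_support_of_single_mem hγ hdeg hγ')
  · obtain ⟨μ, hμ, hμγ, hσμ⟩ := h.exists_sigma_eq_of_mem_support hγ hdeg hv
    obtain ⟨μ', hμ', hμγ', hσμ'⟩ := h.exists_sigma_eq_of_mem_support hγ' hdeg' hv'
    rw [← hμγ, ← hμγ', h.injOn hμ hμ' (hσμ.trans hσμ'.symm)]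

theorem pairwiseDisjoint_block [DecidableEq ι] (h : IsJacobianMatching G σ) :
    (G.image (block σ) : Set (ι →₀ ℕ)).PairwiseDisjoint support := by
  simp only [Finset.coe_image]
  rintro _ ⟨γ, hγ, rfl⟩ _ ⟨γ', hγ', rfl⟩ hne
  exact Finset.disjoint_left.2 fun v hv hv' => hne (h.block_eq_of_mem_support hγ hγ' hv hv')

theorem setOf_add_single_eq_block [DecidableEq ι] (h : IsJacobianMatching G σ) :
    {δ | ∃ α ∈ G.image (block σ), ∃ i, δ + single i 1 = α} = G := by
  ext δ
  constructor
  · rintro ⟨α, hα, i, hi⟩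
    obtain ⟨γ, hγ, rfl⟩ := Finset.mem_image.1 hα
    exact h.mem_of_add_single_eq_block hγ hi
  · intro hδ
    obtain ⟨i, hi⟩ := exists_add_single_eq_block σ δ
    exact ⟨_, Finset.mem_image_of_mem _ hδ, i, hi⟩

end IsJacobianMatching

end Combinatorics

section Algebra

variable {ι K : Type*} [Field K]

def IsMonomialIdeal (I : Ideal (MvPolynomial ι K)) : Prop :=
  ∃ B : Set (ι →₀ ℕ), I = Ideal.span ((fun β => monomial β 1) '' B)

lemma monomial_one_mem_span_monomial_iff {d : ι →₀ ℕ} {S : Set (ι →₀ ℕ)} :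
    monomial d (1 : K) ∈ Ideal.span ((fun s => monomial s 1) '' S) ↔ ∃ s ∈ S, s ≤ d := by
  classical
  rw [mem_ideal_span_monomial_image, support_monomial, if_neg one_ne_zero]
  simp

lemma coeff_mul_eq_coeff_zero_mul {p q : MvPolynomial ι K} {d : ι →₀ ℕ}
    (hp : ∀ v ∈ p.support, v ≤ d → v = d) : coeff d (q * p) = coeff 0 q * coeff d p := by
  classical
  rw [coeff_mul, Finset.sum_eq_single_of_mem (0, d) (by simp)]
  rintro ⟨u, v⟩ huv hne
  rw [Finset.HasAntidiagonal.mem_antidiagonal] at huv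
  by_cases hv : v ∈ p.support
  · obtain rfl := hp v hv (huv ▸ le_add_self)
    exact absurd (by simpa using huv) hne
  · rw [MvPolynomial.notMem_support_iff.1 hv, mul_zero]

lemma coeff_sum_monomial_one [DecidableEq ι] (A : Finset (ι →₀ ℕ)) (d : ι →₀ ℕ) :
    coeff d (∑ α ∈ A, monomial α (1 : K)) = if d ∈ A then 1 else 0 := by
  simp [coeff_sum, coeff_monomial]

lemma pderiv_sum_monomial_one [DecidableEq ι] {A : Finset (ι →₀ ℕ)}
    (hA : (A : Set (ι →₀ ℕ)).PairwiseDisjoint support) {α : ι →₀ ℕ} (hα : α ∈ A) {i : ι}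
    (hi : i ∈ α.support) :
    pderiv i (∑ β ∈ A, monomial β (1 : K)) = monomial (α - single i 1) (α i : K) := by
  rw [map_sum, Finset.sum_eq_single_of_mem α hα, pderiv_monomial, one_mul]
  intro β hβ hne
  have hβi : β i = 0 := notMem_support_iff.1 fun hiβ =>
    Finset.disjoint_left.1 (hA hβ hα hne) hiβ hi
  rw [pderiv_monomial, hβi, Nat.cast_zero, mul_zero, map_zero]

lemma mem_support_pderiv_iff [CharZero K] {f : MvPolynomial ι K} {i : ι} {d : ι →₀ ℕ} :
    d ∈ (pderiv i f).support ↔ d + single i 1 ∈ f.support := by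
  simp only [MvPolynomial.mem_support_iff, coeff_pderiv, ne_eq, mul_eq_zero, not_or]
  exact and_iff_left (Nat.cast_add_one_ne_zero _)

theorem span_pderiv_sum_monomial_one [CharZero K] [DecidableEq ι] {A : Finset (ι →₀ ℕ)}
    (hA : (A : Set (ι →₀ ℕ)).PairwiseDisjoint support) :
    Ideal.span (Set.range fun i => pderiv i (∑ α ∈ A, monomial α (1 : K))) =
      Ideal.span ((fun δ => monomial δ 1) '' {δ | ∃ α ∈ A, ∃ i, δ + single i 1 = α}) := by
  apply le_antisymm
  · refine Ideal.span_le.2 (Set.range_subset_iff.2 fun i => ?_)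
    refine mem_ideal_span_monomial_image.2 fun d hd => ⟨d, ?_, le_rfl⟩
    rw [mem_support_pderiv_iff, MvPolynomial.mem_support_iff, coeff_sum_monomial_one] at hd
    exact ⟨_, by simpa using hd, i, rfl⟩
  · refine Ideal.span_le.2 ?_
    rintro _ ⟨δ, ⟨α, hα, i, rfl⟩, rfl⟩
    have hderiv := pderiv_sum_monomial_one (K := K) hA hα (i := i) (by simp)
    simp only [add_tsub_cancel_right, Finsupp.coe_add, Pi.add_apply, single_eq_same,
      Nat.cast_add, Nat.cast_one] at hderiv
    have : monomial δ (1 : K) = C ((δ i : K) + 1)⁻¹ * pderiv i (∑ α ∈ A, monomial α 1) := by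
      rw [hderiv, C_mul_monomial, inv_mul_cancel₀ (Nat.cast_add_one_ne_zero _)]
    change monomial δ (1 : K) ∈ _
    rw [this]
    exact Ideal.mul_mem_left _ _ (Ideal.subset_span ⟨i, rfl⟩)

section DerivExponents

variable [Fintype ι] [DecidableEq ι] (f : MvPolynomial ι K)

noncomputable def derivExponents : Finset (ι →₀ ℕ) :=
  Finset.univ.biUnion fun i => (pderiv i f).support

open Classical in
noncomputable def minimalDerivExponents : Finset (ι →₀ ℕ) :=
  {γ ∈ derivExponents f | Minimal (· ∈ derivExponents f) γ}

variable {f}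

lemma mem_derivExponents {d : ι →₀ ℕ} :
    d ∈ derivExponents f ↔ ∃ i, d ∈ (pderiv i f).support := by
  simp [derivExponents]

lemma mem_minimalDerivExponents {γ : ι →₀ ℕ} :
    γ ∈ minimalDerivExponents f ↔ Minimal (· ∈ derivExponents f) γ := by
  simp only [minimalDerivExponents, Finset.mem_filter, and_iff_right_iff_imp]
  exact Minimal.prop

lemma exists_mem_minimalDerivExponents_le {d : ι →₀ ℕ} (hd : d ∈ derivExponents f) :
    ∃ γ ∈ minimalDerivExponents f, γ ≤ d :=
  let ⟨γ, hle, hmin⟩ := (derivExponents f).finite_toSet.exists_le_minimal hd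
  ⟨γ, mem_minimalDerivExponents.2 hmin, hle⟩

lemma isAntichain_minimalDerivExponents :
    IsAntichain (· ≤ ·) (minimalDerivExponents f : Set (ι →₀ ℕ)) := fun _ hγ _ hδ hne hle =>
  hne ((mem_minimalDerivExponents.1 hδ).eq_of_le (mem_minimalDerivExponents.1 hγ).prop hle)

theorem span_pderiv_eq_span_minimalDerivExponents
    (hmono : IsMonomialIdeal (Ideal.span (Set.range fun i => pderiv i f))) :
    Ideal.span (Set.range fun i => pderiv i f) =
      Ideal.span ((fun γ => monomial γ 1) '' minimalDerivExponents f) := by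
  obtain ⟨B, hB⟩ := hmono
  apply le_antisymm
  · refine Ideal.span_le.2 (Set.range_subset_iff.2 fun i => ?_)
    refine mem_ideal_span_monomial_image.2 fun d hd => ?_
    exact exists_mem_minimalDerivExponents_le (mem_derivExponents.2 ⟨i, hd⟩)
  · refine Ideal.span_le.2 ?_
    rintro _ ⟨γ, hγ, rfl⟩
    obtain ⟨i, hi⟩ := mem_derivExponents.1 (mem_minimalDerivExponents.1 hγ).prop
    have hmem : pderiv i f ∈ Ideal.span ((fun β => monomial β 1) '' B) :=
      hB ▸ Ideal.subset_span ⟨i, rfl⟩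
    rw [SetLike.mem_coe, hB, monomial_one_mem_span_monomial_iff]
    exact mem_ideal_span_monomial_image.1 hmem γ hi

/-- Read off `x^γ₀ = ∑ hᵢ ∂ᵢf` at a minimal exponent `δ`: by minimality only the constant terms
of the `hᵢ` contribute. -/
lemma exists_sum_mul_coeff_pderiv_eq_ite
    (hmono : IsMonomialIdeal (Ideal.span (Set.range fun i => pderiv i f)))
    {γ₀ : ι →₀ ℕ} (hγ₀ : γ₀ ∈ minimalDerivExponents f) :
    ∃ c : ι → K, ∀ δ ∈ minimalDerivExponents f,
      ∑ i, c i * coeff δ (pderiv i f) = if γ₀ = δ then 1 else 0 := by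
  have hmem : monomial γ₀ (1 : K) ∈ Ideal.span (Set.range fun i => pderiv i f) := by
    rw [span_pderiv_eq_span_minimalDerivExponents hmono]
    exact Ideal.subset_span ⟨γ₀, hγ₀, rfl⟩
  obtain ⟨h, hh⟩ := Ideal.mem_span_range_iff_exists_fun.1 hmem
  refine ⟨fun i => coeff 0 (h i), fun δ hδ => ?_⟩
  rw [← coeff_monomial, ← hh, coeff_sum]
  refine Finset.sum_congr rfl fun i _ => (coeff_mul_eq_coeff_zero_mul fun v hv hle => ?_).symm
  exact (mem_minimalDerivExponents.1 hδ).eq_of_le (mem_derivExponents.2 ⟨i, hv⟩) hle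

variable [CharZero K]

lemma minimalDerivExponents_nonempty (hf : ∀ c : K, f ≠ C c) :
    (minimalDerivExponents f).Nonempty := by
  obtain ⟨β, hβ, i, hi⟩ : ∃ β ∈ f.support, ∃ i, β i ≠ 0 := by
    by_contra! h
    exact hf _ (totalDegree_eq_zero_iff_eq_C.1 ((totalDegree_eq_zero_iff (p := f)).2 h))
  have hd : β - single i 1 ∈ derivExponents f := by
    rw [mem_derivExponents]
    refine ⟨i, mem_support_pderiv_iff.2 ?_⟩
    rwa [tsub_add_cancel_of_le (single_le_iff.2 (Nat.one_le_iff_ne_zero.2 hi))]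
  obtain ⟨γ, hγ, -⟩ := exists_mem_minimalDerivExponents_le hd
  exact ⟨γ, hγ⟩

/-- The coefficient rows `(coeff δ (∂ᵢf))_{δ ∈ S}` span `K^S`, and they vanish unless `i` lies in
the set on the right. -/
lemma card_le_card_filter_add_single_mem_support
    (hmono : IsMonomialIdeal (Ideal.span (Set.range fun i => pderiv i f)))
    (S : Finset (minimalDerivExponents f)) :
    S.card ≤ (Finset.univ.filter fun i => ∃ δ ∈ S, δ.1 + single i 1 ∈ f.support).card := by
  classical
  set N := Finset.univ.filter fun i => ∃ δ ∈ S, δ.1 + single i 1 ∈ f.support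
  let row : ι → (S → K) := fun i δ => coeff δ.1.1 (pderiv i f)
  have hrow : ∀ i ∉ N, row i = 0 := fun i hi => funext fun δ => by
    by_contra hδ
    exact hi (Finset.mem_filter.2 ⟨Finset.mem_univ i, δ, δ.2,
      mem_support_pderiv_iff.1 (MvPolynomial.mem_support_iff.2 hδ)⟩)
  have hspan : ⊤ ≤ Submodule.span K (N.image row : Set (S → K)) := by
    rw [← (Pi.basisFun K S).span_eq, Submodule.span_le]
    rintro _ ⟨δ₀, rfl⟩
    obtain ⟨c, hc⟩ := exists_sum_mul_coeff_pderiv_eq_ite hmono δ₀.1.2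
    have : Pi.basisFun K S δ₀ = ∑ i, c i • row i := funext fun δ => by
      simp only [Pi.basisFun_apply, Finset.sum_apply, Pi.smul_apply, smul_eq_mul, row]
      rw [hc δ.1 δ.1.2, Pi.single_apply]
      exact if_congr (Subtype.ext_iff.trans (Subtype.ext_iff.trans eq_comm)) rfl rfl
    rw [this]
    refine Submodule.sum_mem _ fun i _ => ?_
    by_cases hi : i ∈ N
    · exact Submodule.smul_mem _ _ (Submodule.subset_span (Finset.mem_image_of_mem _ hi))
    · rw [hrow i hi, smul_zero]
      exact zero_mem _
  calc S.card = Module.finrank K (⊤ : Submodule K (S → K)) := by simp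
    _ ≤ Module.finrank K (Submodule.span K (N.image row : Set (S → K))) :=
      Submodule.finrank_mono hspan
    _ ≤ (N.image row).card := finrank_span_finset_le_card _
    _ ≤ N.card := Finset.card_image_le

theorem exists_isJacobianMatching
    (hmono : IsMonomialIdeal (Ideal.span (Set.range fun i => pderiv i f)))
    (hG : (minimalDerivExponents f).Nonempty) :
    ∃ σ, IsJacobianMatching (minimalDerivExponents f) σ := by
  classical
  obtain ⟨σ', hinj, hσ'⟩ := (Fintype.all_card_le_filter_rel_iff_exists_injective
    fun (γ : minimalDerivExponents f) i => γ.1 + single i 1 ∈ f.support).1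
    (card_le_card_filter_add_single_mem_support hmono)
  obtain ⟨γ₀, hγ₀⟩ := hG
  let σ γ := if hγ : γ ∈ minimalDerivExponents f then σ' ⟨γ, hγ⟩ else σ' ⟨γ₀, hγ₀⟩
  have hσ : ∀ γ (hγ : γ ∈ minimalDerivExponents f), σ γ = σ' ⟨γ, hγ⟩ := fun γ hγ => dif_pos hγ
  refine ⟨σ, isAntichain_minimalDerivExponents, fun γ hγ δ hδ hγδ => ?_,
    fun γ hγ β j hβ => exists_mem_minimalDerivExponents_le (mem_derivExponents.2 ⟨j, ?_⟩)⟩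
  · rw [hσ γ hγ, hσ δ hδ] at hγδ
    exact congrArg Subtype.val (hinj hγδ)
  · rw [mem_support_pderiv_iff, hβ, hσ γ hγ]
    exact hσ' ⟨γ, hγ⟩

theorem exists_pairwiseDisjoint_span_pderiv_sum_monomial_eq (hf : ∀ c : K, f ≠ C c)
    (hmono : IsMonomialIdeal (Ideal.span (Set.range fun i => pderiv i f))) :
    ∃ A : Finset (ι →₀ ℕ), A.Nonempty ∧ (∀ α ∈ A, α ≠ 0) ∧
      (A : Set (ι →₀ ℕ)).PairwiseDisjoint support ∧
      Ideal.span (Set.range fun i => pderiv i (∑ α ∈ A, monomial α 1)) =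
        Ideal.span (Set.range fun i => pderiv i f) := by
  have hG := minimalDerivExponents_nonempty hf
  obtain ⟨σ, hσ⟩ := exists_isJacobianMatching hmono hG
  refine ⟨_, hG.image (block σ), Finset.forall_mem_image.2 fun γ _ => block_ne_zero σ γ,
    hσ.pairwiseDisjoint_block, ?_⟩
  rw [span_pderiv_sum_monomial_one hσ.pairwiseDisjoint_block, hσ.setOf_add_single_eq_block,
    span_pderiv_eq_span_minimalDerivExponents hmono]

end DerivExponents

end Algebra

end MonomialJacobian

/-- If `f` is nonconstant and its Jacobian ideal is a monomial ideal, then there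
is a Thom–Sebastiani polynomial `f' = Σ_{α ∈ F'} x^α` (with `F'` a nonempty
finite set of nonzero exponent vectors with pairwise disjoint supports) whose
Jacobian ideal equals that of `f`. -/
theorem monomial_jacobian_ideal_thom_sebastiani {n : ℕ}
    (f : MvPolynomial (Fin n) ℂ) (hf : ∀ c : ℂ, f ≠ C c)
    (hmono : ∃ B : Set (Fin n → ℕ),
      jacobianIdeal f = Ideal.span (mono '' B)) :
    ∃ F' : Finset (Fin n → ℕ), F'.Nonempty ∧ (∀ α ∈ F', α ≠ 0) ∧
      ((F' : Set (Fin n → ℕ)).Pairwise fun α α' =>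
        Disjoint (Function.support α) (Function.support α')) ∧
      jacobianIdeal (∑ α ∈ F', mono α) = jacobianIdeal f := by
  obtain ⟨B, hB⟩ := hmono
  obtain ⟨A, hAne, hA0, hAdisj, hJ⟩ :=
    MonomialJacobian.exists_pairwiseDisjoint_span_pderiv_sum_monomial_eq hf
      ⟨equivFunOnFinite.symm '' B, by rw [Set.image_image]; exact hB⟩
  refine ⟨A.image (⇑), hAne.image _, Finset.forall_mem_image.2 fun α hα => ?_, ?_, ?_⟩
  · exact DFunLike.coe_injective.ne (hA0 α hα)
  · rintro _ hα _ hα' hne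
    obtain ⟨α, hαA, rfl⟩ := Finset.mem_image.1 hα
    obtain ⟨α', hα'A, rfl⟩ := Finset.mem_image.1 hα'
    rw [fun_support_eq, fun_support_eq, Finset.disjoint_coe]
    exact hAdisj hαA hα'A (ne_of_apply_ne _ hne)
  · rw [Finset.sum_image DFunLike.coe_injective.injOn]
    simp only [mono, equivFunOnFinite_symm_coe]
    exact hJ
end

section
/- Let f ∈ ℂ[x₁,…,xₙ] be nonzero and let χ be a ℂ-linear derivation of ℂ[x₁,…,xₙ] with χ(f) = f. Then every ℂ-linear derivation θ of ℂ[x₁,…,xₙ] with θ(f) ∈ ⟨f⟩ can be written uniquely as θ = g·χ + η, where g ∈ ℂ[x₁,…,xₙ] and η is a derivation with η(f) = 0. In other words, the ℂ[x₁,…,xₙ]-module Der(−log f) := {θ : θ(f) ∈ ⟨f⟩} decomposes as the direct sum of the free module ℂ[x₁,…,xₙ]·χ and the module {θ : θ(f) = 0} of derivations annihilating f. -/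
namespace Derivation

variable {R A : Type*} [CommRing R] [CommRing A] [Algebra R A]

theorem smul_add_apply_of_apply_eq_self {χ η : Derivation R A A} {f : A} (hχ : χ f = f)
    (hη : η f = 0) (g : A) : (g • χ + η) f = g * f := by
  simp [hχ, hη]

/-- Evaluating at `f` forces the coefficient of `χ` to be the cofactor of `θ f` in `f · A`. -/
theorem existsUnique_smul_add_of_apply_eq_self {χ θ : Derivation R A A} {f : A}
    (hf : IsRightRegular f) (hχ : χ f = f) (hθ : θ f ∈ Ideal.span {f}) :
    ∃! p : A × Derivation R A A, θ = p.1 • χ + p.2 ∧ p.2 f = 0 := by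
  obtain ⟨g, hg⟩ := Ideal.mem_span_singleton'.mp hθ
  refine ⟨(g, θ - g • χ), ⟨by simp, by simp [hχ, hg]⟩, ?_⟩
  rintro ⟨p, η⟩ ⟨rfl, hη : η f = 0⟩
  obtain rfl : p = g := hf <| show p * f = g * f by
    rw [hg, smul_add_apply_of_apply_eq_self hχ hη]
  simp

end Derivation

/-- If `χ(f) = f` for a derivation `χ` and `f ≠ 0`, then every logarithmic
derivation `θ` (i.e. `θ(f) ∈ ⟨f⟩`) decomposes uniquely as `θ = g • χ + η`
with `η(f) = 0`: `Der(−log f) = ℂ[x]·χ ⊕ ann(f)`. -/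
theorem logarithmic_derivations_decompose {n : ℕ}
    (f : MvPolynomial (Fin n) ℂ) (hf : f ≠ 0)
    (χ : Derivation ℂ (MvPolynomial (Fin n) ℂ) (MvPolynomial (Fin n) ℂ))
    (hχ : χ f = f) :
    ∀ θ : Derivation ℂ (MvPolynomial (Fin n) ℂ) (MvPolynomial (Fin n) ℂ),
      θ f ∈ Ideal.span {f} →
      ∃! p : MvPolynomial (Fin n) ℂ ×
          Derivation ℂ (MvPolynomial (Fin n) ℂ) (MvPolynomial (Fin n) ℂ),
        θ = p.1 • χ + p.2 ∧ p.2 f = 0 :=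
  fun _ hθ ↦
    Derivation.existsUnique_smul_add_of_apply_eq_self (IsRegular.of_ne_zero hf).right hχ hθ
end

section
/- Let φ be a ℂ-algebra automorphism of ℂ[x₁,…,xₙ] and let f ∈ ℂ[x₁,…,xₙ]. Then the image under φ of the Jacobian ideal of f equals the Jacobian ideal of φ(f): Ideal.map φ (J_f) = J_{φ(f)}. -/
/-!
By the chain rule `∂ᵢ(φ f) = ∑ⱼ φ(∂ⱼ f) · ∂ᵢ(φ xⱼ)`, so `J_{φ f} ⊆ φ(J_f)` for every algebra
endomorphism `φ`. Applied to `φ⁻¹` and `φ f` this gives `J_f ⊆ φ⁻¹(J_{φ f})`, the reverse inclusion.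
-/

open MvPolynomial

theorem pderiv_algHom_apply {R σ τ : Type*} [CommSemiring R] [Fintype σ]
    (φ : MvPolynomial σ R →ₐ[R] MvPolynomial τ R) (i : τ) (f : MvPolynomial σ R) :
    pderiv i (φ f) = ∑ j, φ (pderiv j f) * pderiv i (φ (X j)) := by
  classical
  induction f using MvPolynomial.induction_on with
  | C a => simp
  | add p q hp hq => simp only [map_add, hp, hq, add_mul, Finset.sum_add_distrib]
  | mul_X p j hp =>
    simp only [map_mul, Derivation.leibniz, pderiv_X, smul_eq_mul, map_add, add_mul, hp,
      Finset.sum_add_distrib, Pi.single_apply, mul_ite, mul_one, mul_zero, apply_ite φ, map_zero,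
      ite_mul, zero_mul, Finset.sum_ite_eq, Finset.mem_univ, if_true, Finset.mul_sum, mul_assoc]

theorem jacobianIdeal_le_map {n : ℕ}
    (φ : MvPolynomial (Fin n) ℂ →ₐ[ℂ] MvPolynomial (Fin n) ℂ) (f : MvPolynomial (Fin n) ℂ) :
    jacobianIdeal (φ f) ≤ (jacobianIdeal f).map φ := by
  rw [jacobianIdeal, Ideal.span_le]
  rintro _ ⟨i, rfl⟩
  show pderiv i (φ f) ∈ _
  rw [pderiv_algHom_apply]
  exact Ideal.sum_mem _ fun j _ =>
    Ideal.mul_mem_right _ _ (Ideal.mem_map_of_mem _ (Ideal.subset_span ⟨j, rfl⟩))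

/-- The Jacobian ideal is an analytic invariant: for any `ℂ`-algebra
automorphism `φ`, `φ(J_f) = J_{φ(f)}`. -/
theorem jacobian_ideal_map_automorphism {n : ℕ}
    (φ : MvPolynomial (Fin n) ℂ ≃ₐ[ℂ] MvPolynomial (Fin n) ℂ)
    (f : MvPolynomial (Fin n) ℂ) :
    Ideal.map (φ : MvPolynomial (Fin n) ℂ →+* MvPolynomial (Fin n) ℂ)
        (jacobianIdeal f) = jacobianIdeal (φ f) := by
  refine le_antisymm ?_ (jacobianIdeal_le_map φ.toAlgHom f)
  calc (jacobianIdeal f).map (φ : MvPolynomial (Fin n) ℂ →+* MvPolynomial (Fin n) ℂ)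
      = (jacobianIdeal (φ.symm (φ f))).map φ := by rw [φ.symm_apply_apply]; rfl
    _ ≤ ((jacobianIdeal (φ f)).map φ.symm).map φ :=
        Ideal.map_mono (jacobianIdeal_le_map φ.symm.toAlgHom _)
    _ = jacobianIdeal (φ f) := Ideal.map_of_equiv φ.symm.toRingEquiv
end
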